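/- arXiv:math/0510209 — 2 statements merged into one kernel-verified Lean document; each statement's English description precedes it below -/
import Mathlib

section
/- Let $m \ge 2$, $p \ge 2$, let $G = G_1 \ast \cdots \ast G_m$ be the free product of $m$ finite groups each of order $p$, and let $k \ge 1$. In the complex group algebra $\mathbb{C}[G^k]$, define $w^{(k)}_n = \sum_{|v| = n} \Delta(v)$, where $\Delta : G \to G^k$ is the diagonal embedding and the (finite) sum runs over all elements $v \in G$ of length $n$. Then for every $n \ge 2$: $w^{(k)}_1 w^{(k)}_n = w^{(k)}_n w^{(k)}_1 = w^{(k)}_{n+1} + (p-2)\,w^{(k)}_n + (m-1)(p-1)\,w^{(k)}_{n-1}$. -/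
open Monoid

/-- The length of an element of a free product: the number of letters in its
unique reduced word. -/
noncomputable def cplen {ι : Type*} {G : ι → Type*} [∀ i, Group (G i)]
    (g : CoprodI G) : ℕ := by
  classical exact (CoprodI.Word.equiv g).toList.length

/-- `w G k n` is the sum, in the group algebra `ℂ[G^k]`, of the diagonal images
of all elements of the free product `G` of length `n`. -/
noncomputable def w {ι : Type*} (G : ι → Type*) [∀ i, Group (G i)] (k n : ℕ) :
    MonoidAlgebra ℂ (Fin k → CoprodI G) :=
  ∑ᶠ v ∈ {v : CoprodI G | cplen v = n},
    MonoidAlgebra.of ℂ (Fin k → CoprodI G) (fun _ => v)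

open CoprodI

section WordLemmas
variable {ι : Type*} {G : ι → Type*} [∀ i, Group (G i)]

lemma prod_injective' : Function.Injective (Word.prod : Word G → CoprodI G) := by
  classical
  intro w1 w2 h
  have h1 : Word.equiv (Word.prod w1) = w1 := Word.equiv.apply_symm_apply w1
  have h2 : Word.equiv (Word.prod w2) = w2 := Word.equiv.apply_symm_apply w2
  rw [← h1, ← h2, h]

lemma cplen_eq (v : CoprodI G) (W : Word G) (h : W.prod = v) :
    cplen v = W.toList.length := by
  classical
  unfold cplen
  congr 1
  have h0 : Word.prod (Word.equiv v) = v := Word.equiv.symm_apply_apply v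
  rw [prod_injective' (G := G) (h0.trans h.symm)]

lemma exists_word (v : CoprodI G) : ∃ W : Word G, W.prod = v ∧ W.toList.length = cplen v := by
  classical
  refine ⟨Word.equiv v, Word.equiv.symm_apply_apply v, ?_⟩
  unfold cplen; rfl

lemma cons_decomp (W : Word G) {i₀ : ι} {y₀ : G i₀} {l} (hL : W.toList = ⟨i₀, y₀⟩ :: l) :
    ∃ (Wt : Word G) (h1 : Wt.fstIdx ≠ some i₀) (h2 : y₀ ≠ 1), Wt.toList = l ∧
      W = Word.cons y₀ Wt h1 h2 := by
  have hchain := W.chain_ne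
  rw [hL, List.isChain_cons] at hchain
  refine ⟨⟨l, fun x hx => W.ne_one x (by rw [hL]; exact List.mem_cons_of_mem _ hx),
    hchain.2⟩, ?_, W.ne_one ⟨i₀, y₀⟩ (by rw [hL]; exact List.mem_cons_self), rfl, ?_⟩
  · rw [Word.fstIdx_ne_iff]
    intro x hx
    exact hchain.1 x hx
  · apply Word.ext
    simp [Word.cons, hL]

lemma cplen_mul_ne {j : ι} {z : G j} (hz : z ≠ 1) (u : CoprodI G) (W : Word G)
    (hW : W.prod = u) {i₀ : ι} {y₀ : G i₀} {l} (hL : W.toList = ⟨i₀, y₀⟩ :: l)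
    (hj : j ≠ i₀) : cplen (of z * u) = l.length + 2 := by
  have hfst : W.fstIdx ≠ some j := by
    simp [Word.fstIdx, hL]; exact fun h => (hj h.symm).elim
  have := cplen_eq (of z * u) (Word.cons z W hfst hz) (by rw [Word.prod_cons, hW])
  rw [this]
  simp [Word.cons, hL]

lemma cplen_mul_eq_ne {i₀ : ι} {z : G i₀} (hz : z ≠ 1) (u : CoprodI G) (W : Word G)
    (hW : W.prod = u) {y₀ : G i₀} {l} (hL : W.toList = ⟨i₀, y₀⟩ :: l)
    (hzy : z * y₀ ≠ 1) : cplen (of z * u) = l.length + 1 := by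
  obtain ⟨Wt, h1, h2, hlt, rfl⟩ := cons_decomp W hL
  rw [Word.prod_cons] at hW
  have hprod : (Word.cons (z * y₀) Wt h1 hzy).prod = of z * u := by
    rw [Word.prod_cons, ← hW, map_mul, mul_assoc]
  rw [cplen_eq _ _ hprod]
  simp [Word.cons, hlt]

lemma cplen_mul_eq_eq {i₀ : ι} {z : G i₀} (hz : z ≠ 1) (u : CoprodI G) (W : Word G)
    (hW : W.prod = u) {y₀ : G i₀} {l} (hL : W.toList = ⟨i₀, y₀⟩ :: l)
    (hzy : z * y₀ = 1) : cplen (of z * u) = l.length := by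
  obtain ⟨Wt, h1, h2, hlt, rfl⟩ := cons_decomp W hL
  rw [Word.prod_cons] at hW
  have hprod : Wt.prod = of z * u := by
    rw [← hW, ← mul_assoc, ← map_mul, hzy, map_one, one_mul]
  rw [cplen_eq _ _ hprod, hlt]

lemma cplen_of {j : ι} {z : G j} (hz : z ≠ 1) : cplen (of z : CoprodI G) = 1 := by
  have h1 : (Word.empty : Word G).fstIdx ≠ some j := by simp [Word.fstIdx, Word.empty]
  have := cplen_eq (of z : CoprodI G) (Word.cons z Word.empty h1 hz)
    (by rw [Word.prod_cons, Word.prod_empty, mul_one])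
  rw [this]; simp [Word.cons, Word.empty]

lemma cplen_eq_one {v : CoprodI G} (h : cplen v = 1) :
    ∃ (j : ι) (z : G j), z ≠ 1 ∧ v = of z := by
  obtain ⟨W, hW, hlen⟩ := exists_word v
  rw [h] at hlen
  obtain ⟨⟨j, z⟩, hl⟩ : ∃ a, W.toList = [a] := List.length_eq_one_iff.mp hlen
  refine ⟨j, z, W.ne_one _ (by rw [hl]; exact List.mem_cons_self), ?_⟩
  rw [← hW]
  unfold Word.prod
  rw [hl]; simp

end WordLemmas

section Inv
variable {ι : Type*} {G : ι → Type*} [∀ i, Group (G i)]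

/-- The reverse-inverse of a reduced word. -/
def wordInv (W : Word G) : Word G where
  toList := (W.toList.map fun a => (⟨a.1, a.2⁻¹⟩ : Σ i, G i)).reverse
  ne_one := by
    intro x hx
    rw [List.mem_reverse, List.mem_map] at hx
    obtain ⟨a, ha, rfl⟩ := hx
    simpa using W.ne_one a ha
  chain_ne := by
    rw [List.isChain_reverse]
    refine (List.isChain_map _).mpr ?_
    have := W.chain_ne
    refine List.IsChain.imp ?_ this
    intro a b h
    exact fun hh => h hh.symm

lemma wordInv_prod (W : Word G) : (wordInv W).prod = W.prod⁻¹ := by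
  unfold Word.prod wordInv
  rw [List.prod_inv_reverse]
  simp only [List.map_reverse, List.map_map]
  congr 2

lemma cplen_inv (v : CoprodI G) : cplen v⁻¹ = cplen v := by
  obtain ⟨W, hW, hlen⟩ := exists_word v
  rw [cplen_eq v⁻¹ (wordInv W) (by rw [wordInv_prod, hW]), ← hlen]
  simp [wordInv]

end Inv

section Count
variable {ι : Type*} {G : ι → Type*} [∀ i, Group (G i)]

lemma of_letter_inj {j j' : ι} {z : G j} {z' : G j'} (hz : z ≠ 1) (hz' : z' ≠ 1)
    (h : (of z : CoprodI G) = of z') : (⟨j, z⟩ : Σ i, G i) = ⟨j', z'⟩ := by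
  have h1 : (Word.empty : Word G).fstIdx ≠ some j := by simp [Word.fstIdx, Word.empty]
  have h1' : (Word.empty : Word G).fstIdx ≠ some j' := by simp [Word.fstIdx, Word.empty]
  have : Word.cons z Word.empty h1 hz = Word.cons z' Word.empty h1' hz' := by
    apply prod_injective'
    rw [Word.prod_cons, Word.prod_cons, Word.prod_empty, mul_one, mul_one, h]
  have := congrArg Word.toList this
  simpa [Word.cons] using this

variable [DecidableEq ι] [∀ i, DecidableEq (G i)] [DecidableEq (CoprodI G)]
variable [Fintype ι] [∀ i, Fintype (G i)]

/-- The filtered letter set. -/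
noncomputable def TT (u : CoprodI G) (n : ℕ) : Finset (Σ j, G j) :=
  Finset.univ.filter (fun q => q.2 ≠ 1 ∧ cplen (of q.2 * u) = n)

lemma filter_card_eq (S1 : Finset (CoprodI G)) (hS1 : ∀ g, g ∈ S1 ↔ cplen g = 1)
    (u : CoprodI G) (n : ℕ) :
    (S1.filter (fun g => cplen (g * u) = n)).card = (TT u n).card := by
  have himg : S1.filter (fun g => cplen (g * u) = n) = (TT u n).image (fun q => of q.2) := by
    ext g
    simp only [Finset.mem_filter, Finset.mem_image, TT, Finset.mem_univ, true_and]
    constructor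
    · rintro ⟨hg1, hgn⟩
      obtain ⟨j, z, hz, rfl⟩ := cplen_eq_one ((hS1 g).mp hg1)
      exact ⟨⟨j, z⟩, ⟨hz, hgn⟩, rfl⟩
    · rintro ⟨⟨j, z⟩, ⟨hz, hc⟩, rfl⟩
      exact ⟨(hS1 _).mpr (cplen_of hz), hc⟩
  rw [himg, Finset.card_image_of_injOn]
  rintro ⟨j, z⟩ hq ⟨j', z'⟩ hq' h
  simp only [TT, Finset.mem_coe, Finset.mem_filter] at hq hq'
  exact of_letter_inj hq.2.1 hq'.2.1 h

end Count

section Count2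
variable {ι : Type*} {G : ι → Type*} [∀ i, Group (G i)]
variable [DecidableEq ι] [∀ i, DecidableEq (G i)] [DecidableEq (CoprodI G)]
variable [Fintype ι] [∀ i, Fintype (G i)]

lemma TT_card_A {u : CoprodI G} {n : ℕ} (hn : 1 ≤ n) (hu : cplen u = n + 1) :
    (TT u n).card = 1 := by
  obtain ⟨W, hW, hlen⟩ := exists_word u
  rw [hu] at hlen
  obtain ⟨⟨i₀, y₀⟩, l, hL⟩ : ∃ a l, W.toList = a :: l := by
    cases h : W.toList with
    | nil => rw [h] at hlen; simp at hlen
    | cons a l => exact ⟨a, l, rfl⟩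
  have hy₀ : y₀ ≠ 1 := W.ne_one _ (by rw [hL]; exact List.mem_cons_self)
  have hll : l.length = n := by rw [hL] at hlen; simpa using hlen
  have hT : TT u n = {⟨i₀, y₀⁻¹⟩} := by
    ext ⟨j, z⟩
    simp only [TT, Finset.mem_filter, Finset.mem_univ, true_and, Finset.mem_singleton]
    constructor
    · rintro ⟨hz, hc⟩
      by_cases hj : j = i₀
      · subst hj
        by_cases hzy : z * y₀ = 1
        · rw [eq_inv_of_mul_eq_one_left hzy]
        · rw [cplen_mul_eq_ne hz u W hW hL hzy] at hc; omega
      · rw [cplen_mul_ne hz u W hW hL hj] at hc; omega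
    · rintro h
      obtain ⟨rfl, h2⟩ := Sigma.mk.inj_iff.mp h
      have hz : z = y₀⁻¹ := eq_of_heq h2
      subst hz
      refine ⟨inv_ne_one.mpr hy₀, ?_⟩
      rw [cplen_mul_eq_eq (inv_ne_one.mpr hy₀) u W hW hL (inv_mul_cancel y₀), hll]
  rw [hT, Finset.card_singleton]

lemma TT_card_B {u : CoprodI G} {n p : ℕ} (hn : 1 ≤ n) (hu : cplen u = n)
    (hcard : ∀ i, Fintype.card (G i) = p) :
    (TT u n).card = p - 2 := by
  obtain ⟨W, hW, hlen⟩ := exists_word u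
  rw [hu] at hlen
  obtain ⟨⟨i₀, y₀⟩, l, hL⟩ : ∃ a l, W.toList = a :: l := by
    cases h : W.toList with
    | nil => rw [h] at hlen; simp at hlen; omega
    | cons a l => exact ⟨a, l, rfl⟩
  have hy₀ : y₀ ≠ 1 := W.ne_one _ (by rw [hL]; exact List.mem_cons_self)
  have hll : l.length = n - 1 := by rw [hL] at hlen; simp at hlen; omega
  have hT : TT u n = ((Finset.univ \ {1, y₀⁻¹} : Finset (G i₀))).image (Sigma.mk i₀) := by
    ext ⟨j, z⟩
    simp only [TT, Finset.mem_filter, Finset.mem_univ, true_and, Finset.mem_image,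
      Finset.mem_sdiff, Finset.mem_insert, Finset.mem_singleton]
    constructor
    · rintro ⟨hz, hc⟩
      by_cases hj : j = i₀
      · subst hj
        by_cases hzy : z * y₀ = 1
        · rw [cplen_mul_eq_eq hz u W hW hL hzy, hll] at hc; omega
        · exact ⟨z, by push_neg; exact ⟨hz, fun hzi => hzy (by rw [hzi, inv_mul_cancel])⟩, rfl⟩
      · rw [cplen_mul_ne hz u W hW hL hj] at hc; omega
    · rintro ⟨z', hz', h⟩
      push_neg at hz'
      obtain ⟨rfl, h2⟩ := Sigma.mk.inj_iff.mp h.symm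
      have : z = z' := eq_of_heq h2
      subst this
      refine ⟨hz'.1, ?_⟩
      have hzy : z * y₀ ≠ 1 := fun hh => hz'.2 (eq_inv_of_mul_eq_one_left hh)
      rw [cplen_mul_eq_ne hz'.1 u W hW hL hzy, hll]
      omega
  rw [hT, Finset.card_image_of_injective _ sigma_mk_injective, Finset.card_sdiff_of_subset
    (Finset.subset_univ _), Finset.card_univ, hcard i₀]
  have : ({1, y₀⁻¹} : Finset (G i₀)).card = 2 := by
    rw [Finset.card_insert_of_notMem (by simp [hy₀, eq_comm]), Finset.card_singleton]
  rw [this]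

lemma TT_card_C {u : CoprodI G} {n p : ℕ} (hn : 2 ≤ n) (hu : cplen u = n - 1)
    (hcard : ∀ i, Fintype.card (G i) = p) :
    (TT u n).card = (Fintype.card ι - 1) * (p - 1) := by
  obtain ⟨W, hW, hlen⟩ := exists_word u
  rw [hu] at hlen
  obtain ⟨⟨i₀, y₀⟩, l, hL⟩ : ∃ a l, W.toList = a :: l := by
    cases h : W.toList with
    | nil => rw [h] at hlen; simp at hlen; omega
    | cons a l => exact ⟨a, l, rfl⟩
  have hy₀ : y₀ ≠ 1 := W.ne_one _ (by rw [hL]; exact List.mem_cons_self)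
  have hll : l.length = n - 2 := by rw [hL] at hlen; simp at hlen; omega
  have hT : TT u n = (Finset.univ.erase i₀).sigma
      (fun j => (Finset.univ : Finset (G j)).erase 1) := by
    ext ⟨j, z⟩
    simp only [TT, Finset.mem_filter, Finset.mem_univ, true_and, Finset.mem_sigma,
      Finset.mem_erase]
    constructor
    · rintro ⟨hz, hc⟩
      by_cases hj : j = i₀
      · subst hj
        by_cases hzy : z * y₀ = 1
        · rw [cplen_mul_eq_eq hz u W hW hL hzy, hll] at hc; omega
        · rw [cplen_mul_eq_ne hz u W hW hL hzy, hll] at hc; omega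
      · exact ⟨⟨hj, trivial⟩, hz, trivial⟩
    · rintro ⟨⟨hj, -⟩, hz, -⟩
      refine ⟨hz, ?_⟩
      rw [cplen_mul_ne hz u W hW hL hj, hll]
      omega
  rw [hT, Finset.card_sigma]
  have : ∀ j ∈ Finset.univ.erase i₀, ((Finset.univ : Finset (G j)).erase 1).card = p - 1 := by
    intro j _
    rw [Finset.card_erase_of_mem (Finset.mem_univ _), Finset.card_univ, hcard j]
  rw [Finset.sum_congr rfl this, Finset.sum_const, smul_eq_mul,
    Finset.card_erase_of_mem (Finset.mem_univ _), Finset.card_univ]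

end Count2

section Main
variable {ι : Type*} {G : ι → Type*} [∀ i, Group (G i)]
variable [DecidableEq ι] [∀ i, DecidableEq (G i)] [DecidableEq (CoprodI G)]
variable [Fintype ι] [∀ i, Fintype (G i)]

lemma cplen_mul_cases {g v : CoprodI G} (hg : cplen g = 1) (hv : 1 ≤ cplen v) :
    cplen (g * v) = cplen v + 1 ∨ cplen (g * v) = cplen v ∨ cplen (g * v) = cplen v - 1 := by
  obtain ⟨j, z, hz, rfl⟩ := cplen_eq_one hg
  obtain ⟨W, hW, hlen⟩ := exists_word v
  obtain ⟨⟨i₀, y₀⟩, l, hL⟩ : ∃ a lt, W.toList = a :: lt := by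
    cases h : W.toList with
    | nil => rw [h] at hlen; simp at hlen; omega
    | cons a lt => exact ⟨a, lt, rfl⟩
  have hll : l.length + 1 = cplen v := by rw [hL] at hlen; simpa using hlen
  by_cases hj : j = i₀
  · subst hj
    by_cases hzy : z * y₀ = 1
    · right; right; rw [cplen_mul_eq_eq hz v W hW hL hzy]; omega
    · right; left; rw [cplen_mul_eq_ne hz v W hW hL hzy]; omega
  · left; rw [cplen_mul_ne hz v W hW hL hj]; omega

lemma sum_mul_expand {M : Type*} [AddCommMonoid M] (F : CoprodI G → M)
    {n p : ℕ} (hn : 2 ≤ n)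
    (S : ℕ → Finset (CoprodI G)) (hS : ∀ N v, v ∈ S N ↔ cplen v = N)
    (s : Finset (CoprodI G × CoprodI G))
    (hmaps : ∀ x ∈ s, cplen (x.1 * x.2) = n + 1 ∨ cplen (x.1 * x.2) = n ∨
      cplen (x.1 * x.2) = n - 1)
    (hcnt1 : ∀ u, cplen u = n + 1 → ((s.filter fun x => x.1 * x.2 = u)).card = 1)
    (hcnt2 : ∀ u, cplen u = n → ((s.filter fun x => x.1 * x.2 = u)).card = p - 2)
    (hcnt3 : ∀ u, cplen u = n - 1 → ((s.filter fun x => x.1 * x.2 = u)).card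
      = (Fintype.card ι - 1) * (p - 1)) :
    ∑ x ∈ s, F (x.1 * x.2) = (∑ u ∈ S (n + 1), F u) + (p - 2) • (∑ u ∈ S n, F u)
      + ((Fintype.card ι - 1) * (p - 1)) • (∑ u ∈ S (n - 1), F u) := by
  have hmapsto : ∀ x ∈ s, x.1 * x.2 ∈ S (n + 1) ∪ (S n ∪ S (n - 1)) := by
    intro x hx
    rcases hmaps x hx with h | h | h
    · exact Finset.mem_union_left _ ((hS _ _).mpr h)
    · exact Finset.mem_union_right _ (Finset.mem_union_left _ ((hS _ _).mpr h))
    · exact Finset.mem_union_right _ (Finset.mem_union_right _ ((hS _ _).mpr h))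
  rw [← Finset.sum_fiberwise_of_maps_to' hmapsto F]
  have hconst : ∀ u, (∑ x ∈ s.filter (fun x => x.1 * x.2 = u), F u)
      = ((s.filter fun x => x.1 * x.2 = u)).card • F u := fun u => Finset.sum_const _
  have hdisj1 : Disjoint (S (n + 1)) (S n ∪ S (n - 1)) := by
    rw [Finset.disjoint_union_right]
    constructor <;>
    · rw [Finset.disjoint_left]
      intro a ha hb
      rw [hS] at ha hb
      omega
  have hdisj2 : Disjoint (S n) (S (n - 1)) := by
    rw [Finset.disjoint_left]; intro a ha hb; rw [hS] at ha hb; omega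
  rw [Finset.sum_union hdisj1, Finset.sum_union hdisj2, add_assoc]
  congr 1
  · exact Finset.sum_congr rfl fun u hu => by
      rw [hconst, hcnt1 u ((hS _ _).mp hu), one_smul]
  congr 1
  · rw [Finset.sum_congr rfl fun u hu =>
      (hconst u).trans (by rw [hcnt2 u ((hS _ _).mp hu)]), ← Finset.smul_sum]
  · rw [Finset.sum_congr rfl fun u hu =>
      (hconst u).trans (by rw [hcnt3 u ((hS _ _).mp hu)]), ← Finset.smul_sum]

lemma fib_left (S : ℕ → Finset (CoprodI G)) (hS : ∀ N v, v ∈ S N ↔ cplen v = N)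
    (n : ℕ) (u : CoprodI G) :
    (((S 1 ×ˢ S n).filter fun x => x.1 * x.2 = u)).card
      = ((S 1).filter fun g => cplen (g * u) = n).card := by
  apply Finset.card_nbij' (fun x => x.1⁻¹) (fun g => (g⁻¹, g * u))
  · rintro ⟨g, v⟩ hx
    simp only [Finset.mem_coe, Finset.mem_filter, Finset.mem_product] at hx ⊢
    obtain ⟨⟨hg, hv⟩, hprod⟩ := hx
    rw [hS] at hg hv
    refine ⟨(hS _ _).mpr (by rw [cplen_inv, hg]), ?_⟩
    rw [show g⁻¹ * u = v by rw [← hprod]; group]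
    exact hv
  · intro g hg
    simp only [Finset.mem_coe, Finset.mem_filter, Finset.mem_product] at hg ⊢
    obtain ⟨hg1, hgu⟩ := hg
    rw [hS] at hg1
    exact ⟨⟨(hS _ _).mpr (by rw [cplen_inv, hg1]), (hS _ _).mpr hgu⟩, by group⟩
  · rintro ⟨g, v⟩ hx
    simp only [Finset.mem_coe, Finset.mem_filter, Finset.mem_product] at hx
    have : g * v = u := hx.2
    simp only [inv_inv, Prod.mk.injEq]
    exact ⟨trivial, by rw [← this]; group⟩
  · intro g hg
    simp

lemma fib_right (S : ℕ → Finset (CoprodI G)) (hS : ∀ N v, v ∈ S N ↔ cplen v = N)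
    (n : ℕ) (u : CoprodI G) :
    (((S n ×ˢ S 1).filter fun x => x.1 * x.2 = u)).card
      = ((S 1).filter fun g => cplen (g * u⁻¹) = n).card := by
  apply Finset.card_nbij' (fun x => x.2) (fun g => (u * g⁻¹, g))
  · rintro ⟨v, g⟩ hx
    simp only [Finset.mem_coe, Finset.mem_filter, Finset.mem_product] at hx ⊢
    obtain ⟨⟨hv, hg⟩, hprod⟩ := hx
    rw [hS] at hg hv
    refine ⟨(hS _ _).mpr hg, ?_⟩
    rw [show g * u⁻¹ = v⁻¹ by rw [← hprod]; group, cplen_inv]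
    exact hv
  · intro g hg
    simp only [Finset.mem_coe, Finset.mem_filter, Finset.mem_product] at hg ⊢
    obtain ⟨hg1, hgu⟩ := hg
    refine ⟨⟨(hS _ _).mpr ?_, hg1⟩, by group⟩
    rw [show u * g⁻¹ = (g * u⁻¹)⁻¹ by group, cplen_inv]
    exact hgu
  · rintro ⟨v, g⟩ hx
    simp only [Finset.mem_coe, Finset.mem_filter, Finset.mem_product] at hx
    have : v * g = u := hx.2
    simp only [Prod.mk.injEq]
    exact ⟨by rw [← this]; group, trivial⟩
  · intro g hg
    simp

lemma filter_inv_card (S : ℕ → Finset (CoprodI G)) (hS : ∀ N v, v ∈ S N ↔ cplen v = N)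
    (P : CoprodI G → Prop) [DecidablePred P] :
    ((S 1).filter fun g => P g⁻¹).card = ((S 1).filter P).card := by
  apply Finset.card_nbij' (fun g => g⁻¹) (fun g => g⁻¹)
  · intro g hg
    simp only [Finset.mem_coe, Finset.mem_filter] at hg ⊢
    exact ⟨(hS _ _).mpr (by rw [cplen_inv]; exact (hS _ _).mp hg.1), hg.2⟩
  · intro g hg
    simp only [Finset.mem_coe, Finset.mem_filter] at hg ⊢
    exact ⟨(hS _ _).mpr (by rw [cplen_inv]; exact (hS _ _).mp hg.1), by simpa using hg.2⟩
  · intro g _; simp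
  · intro g _; simp

end Main

theorem stmt_6 (m p k : ℕ) (hm : 2 ≤ m) (hp : 2 ≤ p) (hk : 1 ≤ k)
    (G : Fin m → Type*) [∀ i, Group (G i)] [∀ i, Fintype (G i)]
    (hcard : ∀ i, Fintype.card (G i) = p) (n : ℕ) (hn : 2 ≤ n) :
    w G k 1 * w G k n = w G k n * w G k 1 ∧
      w G k 1 * w G k n =
        w G k (n + 1) + ((p : ℂ) - 2) • w G k n +
          (((m : ℂ) - 1) * ((p : ℂ) - 1)) • w G k (n - 1) := by
  classical
  set F : CoprodI G → MonoidAlgebra ℂ (Fin k → CoprodI G) :=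
    fun v => MonoidAlgebra.of ℂ (Fin k → CoprodI G) (fun _ => v) with hFdef
  have hF : ∀ a b : CoprodI G, F a * F b = F (a * b) := fun a b =>
    (map_mul (MonoidAlgebra.of ℂ (Fin k → CoprodI G)) _ _).symm
  have hfin : ∀ N : ℕ, {v : CoprodI G | cplen v = N}.Finite := by
    intro N
    apply Set.Finite.subset (Set.Finite.image
      (fun l : List (Σ i, G i) => (l.map fun a => (CoprodI.of a.2 : CoprodI G)).prod)
      (List.finite_length_eq _ N))
    intro v hv
    obtain ⟨W, hW, hlen⟩ := exists_word v
    exact ⟨W.toList, by rw [Set.mem_setOf_eq, hlen]; exact hv, by rw [← hW]; rfl⟩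
  set S : ℕ → Finset (CoprodI G) := fun N => (hfin N).toFinset with hSdef
  have hS : ∀ (N : ℕ) (v : CoprodI G), v ∈ S N ↔ cplen v = N := fun N v =>
    (hfin N).mem_toFinset
  have hw : ∀ N, w G k N = ∑ v ∈ S N, F v := by
    intro N
    unfold w
    rw [← (hfin N).coe_toFinset, finsum_mem_coe_finset]
  have hprodL : w G k 1 * w G k n = ∑ x ∈ S 1 ×ˢ S n, F (x.1 * x.2) := by
    rw [hw 1, hw n, Finset.sum_mul_sum, Finset.sum_product]
    exact Finset.sum_congr rfl fun g _ => Finset.sum_congr rfl fun v _ => hF g v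
  have hprodR : w G k n * w G k 1 = ∑ x ∈ S n ×ˢ S 1, F (x.1 * x.2) := by
    rw [hw 1, hw n, Finset.sum_mul_sum, Finset.sum_product]
    exact Finset.sum_congr rfl fun g _ => Finset.sum_congr rfl fun v _ => hF g v
  have hmapsL : ∀ x ∈ S 1 ×ˢ S n, cplen (x.1 * x.2) = n + 1 ∨ cplen (x.1 * x.2) = n ∨
      cplen (x.1 * x.2) = n - 1 := by
    rintro ⟨g, v⟩ hx
    rw [Finset.mem_product] at hx
    have hg := (hS 1 g).mp hx.1
    have hv := (hS n v).mp hx.2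
    have h := cplen_mul_cases hg (by rw [hv]; omega)
    rw [hv] at h
    exact h
  have hmapsR : ∀ x ∈ S n ×ˢ S 1, cplen (x.1 * x.2) = n + 1 ∨ cplen (x.1 * x.2) = n ∨
      cplen (x.1 * x.2) = n - 1 := by
    rintro ⟨v, g⟩ hx
    rw [Finset.mem_product] at hx
    have hg := (hS 1 g).mp hx.2
    have hv := (hS n v).mp hx.1
    have hg' : cplen g⁻¹ = 1 := by rw [cplen_inv]; exact hg
    have h := cplen_mul_cases hg' (v := v⁻¹) (by rw [cplen_inv, hv]; omega)
    rw [cplen_inv, hv] at h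
    have heq : cplen (v * g) = cplen (g⁻¹ * v⁻¹) := by
      rw [← cplen_inv (v * g), mul_inv_rev]
    rw [← heq] at h
    exact h
  have hcntL1 : ∀ u, cplen u = n + 1 →
      (((S 1 ×ˢ S n).filter fun x => x.1 * x.2 = u)).card = 1 := by
    intro u hu
    rw [fib_left S hS n u, filter_card_eq (S 1) (hS 1) u n]
    exact TT_card_A (by omega) hu
  have hcntL2 : ∀ u, cplen u = n →
      (((S 1 ×ˢ S n).filter fun x => x.1 * x.2 = u)).card = p - 2 := by
    intro u hu
    rw [fib_left S hS n u, filter_card_eq (S 1) (hS 1) u n]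
    exact TT_card_B (by omega) hu hcard
  have hcntL3 : ∀ u, cplen u = n - 1 →
      (((S 1 ×ˢ S n).filter fun x => x.1 * x.2 = u)).card
        = (Fintype.card (Fin m) - 1) * (p - 1) := by
    intro u hu
    rw [fib_left S hS n u, filter_card_eq (S 1) (hS 1) u n]
    exact TT_card_C hn hu hcard
  have hcntR1 : ∀ u, cplen u = n + 1 →
      (((S n ×ˢ S 1).filter fun x => x.1 * x.2 = u)).card = 1 := by
    intro u hu
    rw [fib_right S hS n u, filter_card_eq (S 1) (hS 1) u⁻¹ n]
    exact TT_card_A (by omega) (by rw [cplen_inv]; exact hu)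
  have hcntR2 : ∀ u, cplen u = n →
      (((S n ×ˢ S 1).filter fun x => x.1 * x.2 = u)).card = p - 2 := by
    intro u hu
    rw [fib_right S hS n u, filter_card_eq (S 1) (hS 1) u⁻¹ n]
    exact TT_card_B (by omega) (by rw [cplen_inv]; exact hu) hcard
  have hcntR3 : ∀ u, cplen u = n - 1 →
      (((S n ×ˢ S 1).filter fun x => x.1 * x.2 = u)).card
        = (Fintype.card (Fin m) - 1) * (p - 1) := by
    intro u hu
    rw [fib_right S hS n u, filter_card_eq (S 1) (hS 1) u⁻¹ n]
    exact TT_card_C hn (by rw [cplen_inv]; exact hu) hcard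
  have KL := sum_mul_expand F hn S hS (S 1 ×ˢ S n) hmapsL hcntL1 hcntL2 hcntL3
  have KR := sum_mul_expand F hn S hS (S n ×ˢ S 1) hmapsR hcntR1 hcntR2 hcntR3
  constructor
  · rw [hprodL, hprodR, KL, KR]
  · rw [hprodL, KL, hw (n + 1), hw n, hw (n - 1),
      ← Nat.cast_smul_eq_nsmul ℂ (p - 2), ← Nat.cast_smul_eq_nsmul ℂ
        ((Fintype.card (Fin m) - 1) * (p - 1))]
    have e2 : ((p - 2 : ℕ) : ℂ) = (p : ℂ) - 2 := by
      rw [Nat.cast_sub hp]; norm_num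
    have e3 : (((Fintype.card (Fin m) - 1) * (p - 1) : ℕ) : ℂ)
        = ((m : ℂ) - 1) * ((p : ℂ) - 1) := by
      rw [Fintype.card_fin, Nat.cast_mul, Nat.cast_sub (by omega), Nat.cast_sub (by omega),
        Nat.cast_one]
    rw [e2, e3]
end

section
/- Let $m \ge 2$, $p \ge 2$, let $G = G_1 \ast \cdots \ast G_m$ be the free product of $m$ finite groups each of order $p$, and let $k \ge 1$. In $\mathbb{C}[G^k]$, define $w^{(k)}_n = \sum_{|v| = n} \Delta(v)$ (sum over all $v \in G$ of length $n$, $\Delta$ the diagonal embedding), and let $\tau : \mathbb{C}[G^k] \to \mathbb{C}$ denote the coefficient of the identity element. Then for $x_1, \dots, x_k \in G$, there exists an integer $n \ge 0$ with $\tau\big((x_1, \dots, x_k) \cdot w^{(k)}_n\big) \ne 0$ if and only if $x_1 = x_2 = \cdots = x_k$. -/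
open Monoid

/-!
The coefficient of `1` in `x * w G k n` is the coefficient of `x⁻¹` in `w G k n`, which is
nonzero exactly when `x⁻¹ = Δ(v)` for some `v` of length `n`. Letting `n` vary, this says
that `x⁻¹`, equivalently `x`, lies on the diagonal.
-/

theorem finite_setOf_cplen_eq {ι : Type*} [Finite ι] {G : ι → Type*} [∀ i, Group (G i)]
    [∀ i, Finite (G i)] (n : ℕ) : {v : CoprodI G | cplen v = n}.Finite := by
  classical
  have toList_injective : Function.Injective
      (fun v : CoprodI G => (CoprodI.Word.equiv v).toList) :=
    fun _ _ h => CoprodI.Word.equiv.injective (CoprodI.Word.ext h)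
  exact (List.finite_length_eq (Σ i, G i) n).preimage toList_injective.injOn

theorem MonoidAlgebra.coeff_finsum_mem_of_ne_zero_iff {R M α : Type*} [Semiring R] [CharZero R]
    [Monoid M] {s : Set α} (hs : s.Finite) (f : α → M) (y : M) :
    (∑ᶠ a ∈ s, of R M (f a)).coeff y ≠ 0 ↔ ∃ a ∈ s, f a = y := by
  classical
  have coeff_eq_card :
      (∑ᶠ a ∈ s, of R M (f a)).coeff y = (hs.toFinset.filter (f · = y)).card := by
    rw [finsum_mem_eq_finite_toFinset_sum _ hs, coeff_sum, ← Finset.sum_boole]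
    simp [of_apply, coeff_single, Finsupp.single_apply]
  rw [coeff_eq_card, Nat.cast_ne_zero, Finset.card_ne_zero, Finset.filter_nonempty_iff]
  simp

theorem exists_const_eq_iff {ι β : Type*} [Nonempty β] (f : ι → β) :
    (∃ c, Function.const ι c = f) ↔ ∀ i j, f i = f j := by
  refine ⟨fun ⟨c, hc⟩ i j => by simp [← hc], fun h => ?_⟩
  rcases isEmpty_or_nonempty ι with hι | ⟨⟨i₀⟩⟩
  · exact ⟨Classical.arbitrary β, funext hι.elim⟩
  · exact ⟨f i₀, funext fun i => h i₀ i⟩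

theorem stmt_8_general (m k : ℕ)
    (G : Fin m → Type*) [∀ i, Group (G i)] [∀ i, Fintype (G i)]
    (x : Fin k → CoprodI G) :
    (∃ n : ℕ, (MonoidAlgebra.of ℂ (Fin k → CoprodI G) x * w G k n).coeff 1 ≠ 0) ↔
      ∀ i j : Fin k, x i = x j := by
  have coeff_ne_zero_iff (n : ℕ) :
      (MonoidAlgebra.of ℂ _ x * w G k n).coeff 1 ≠ 0 ↔
        ∃ v, cplen v = n ∧ Function.const (Fin k) v = x⁻¹ := by
    rw [MonoidAlgebra.of_apply, MonoidAlgebra.coeff_single_mul_apply, one_mul, mul_one, w,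
      MonoidAlgebra.coeff_finsum_mem_of_ne_zero_iff (finite_setOf_cplen_eq n)]
    rfl
  simp only [coeff_ne_zero_iff]
  calc (∃ n v, cplen v = n ∧ Function.const (Fin k) v = x⁻¹)
      ↔ ∃ v, Function.const (Fin k) v = x⁻¹ := by simp
    _ ↔ ∀ i j, x i = x j := by simp [exists_const_eq_iff]

theorem stmt_8 (m p k : ℕ) (hm : 2 ≤ m) (hp : 2 ≤ p) (hk : 1 ≤ k)
    (G : Fin m → Type*) [∀ i, Group (G i)] [∀ i, Fintype (G i)]
    (hcard : ∀ i, Fintype.card (G i) = p) (x : Fin k → CoprodI G) :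
    (∃ n : ℕ, (MonoidAlgebra.of ℂ (Fin k → CoprodI G) x * w G k n).coeff 1 ≠ 0) ↔
      ∀ i j : Fin k, x i = x j :=
  stmt_8_general m k G x
end
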